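/- Let M, N ∈ Mat_{r×s}(ℂ) with Tr(M†M) = 1, let t = min(r,s), and suppose ε ≥ 0 satisfies both ‖MN†‖₁ ≤ 6√2·ε, ‖NM†‖₁ ≤ 6√2·ε, and ‖N†N − M†M‖₁ ≤ 2√2·ε. Then 72ε² ≥ 1/t − 2√2·ε, and consequently ε ≥ (√2/72)·(−1 + √(1 + 36/t)). -/

import Mathlib

open Matrix Complex
open scoped ComplexOrder Classical

noncomputable def matSqrt {n : Type*} [Fintype n] [DecidableEq n]
    (A : Matrix n n ℂ) : Matrix n n ℂ :=
  if h : A.PosSemidef then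
    (h.1.eigenvectorUnitary : Matrix n n ℂ) *
      diagonal ((↑) ∘ (Real.sqrt ∘ h.1.eigenvalues)) *
      (star (h.1.eigenvectorUnitary : Matrix n n ℂ))
  else 0

noncomputable def traceNorm {m n : Type*} [Fintype m] [Fintype n] [DecidableEq n]
    (A : Matrix m n ℂ) : ℝ :=
  ((matSqrt (Aᴴ * A)).trace).re

noncomputable def frobNorm {m n : Type*} [Fintype m] [Fintype n]
    (A : Matrix m n ℂ) : ℝ :=
  Real.sqrt (((Aᴴ * A).trace).re)

noncomputable def fidelity {n : Type*} [Fintype n] [DecidableEq n]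
    (P Q : Matrix n n ℂ) : ℝ :=
  ((matSqrt (matSqrt P * Q * matSqrt P)).trace).re

/-- The outer product |ψ⟩⟨ψ| of a vector. -/
noncomputable def outerMat {ι : Type*} (ψ : ι → ℂ) : Matrix ι ι ℂ :=
  fun p q => ψ p * (starRingEnd ℂ) (ψ q)

/-- Partial trace over the first (A) factor. -/
noncomputable def ptraceA {r s : ℕ} (ρ : Matrix (Fin r × Fin s) (Fin r × Fin s) ℂ) :
    Matrix (Fin s) (Fin s) ℂ :=
  fun k l => ∑ i : Fin r, ρ (i, k) (i, l)

/-- Partial trace over the second (B) factor. -/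
noncomputable def ptraceB {r s : ℕ} (ρ : Matrix (Fin r × Fin s) (Fin r × Fin s) ℂ) :
    Matrix (Fin r) (Fin r) ℂ :=
  fun i j => ∑ k : Fin s, ρ (i, k) (j, k)

/-!
Write `P = MᴴM` and `Q = NᴴN`. On the one hand `Tr(PQ) = ‖NMᴴ‖₂² ≤ ‖NMᴴ‖₁² ≤ 72ε²`. On the other
hand `Tr(PQ) = Tr(P²) + Tr(P(Q - P))`, where Cauchy–Schwarz for the Frobenius inner product and
`‖P‖₂ ≤ Tr P = 1` bound the second term by `‖Q - P‖₂ ≤ ‖Q - P‖₁ ≤ 2√2ε`, while Cauchy–Schwarz on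
the eigenvalues of `MᴴM` and of `MMᴴ` (which have the same trace and the same `Tr(X²)`) gives
`Tr(P²) ≥ 1/t`. The bound on `ε` is the larger root of the resulting quadratic.
-/

section

variable {m n : Type*} [Fintype m] [Fintype n]

noncomputable def flattenL2 (A : Matrix m n ℂ) : EuclideanSpace ℂ (m × n) :=
  WithLp.toLp 2 fun p => A p.1 p.2

lemma trace_conjTranspose_mul_eq_inner (A B : Matrix m n ℂ) :
    (Aᴴ * B).trace = inner ℂ (flattenL2 A) (flattenL2 B) := by
  rw [EuclideanSpace.inner_eq_star_dotProduct, dotProduct, Fintype.sum_prod_type_right]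
  simp [flattenL2, Matrix.trace, Matrix.mul_apply, mul_comm]

lemma frobNorm_eq_norm_flattenL2 (A : Matrix m n ℂ) : frobNorm A = ‖flattenL2 A‖ := by
  rw [frobNorm, trace_conjTranspose_mul_eq_inner]
  exact (congrArg Real.sqrt (inner_self_eq_norm_sq (𝕜 := ℂ) _)).trans
    (Real.sqrt_sq (norm_nonneg _))

lemma frobNorm_nonneg (A : Matrix m n ℂ) : 0 ≤ frobNorm A := Real.sqrt_nonneg _

lemma frobNorm_sq (A : Matrix m n ℂ) : frobNorm A ^ 2 = ((Aᴴ * A).trace).re := by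
  rw [frobNorm_eq_norm_flattenL2, trace_conjTranspose_mul_eq_inner]
  exact (inner_self_eq_norm_sq (𝕜 := ℂ) _).symm

lemma abs_re_trace_conjTranspose_mul_le (A B : Matrix m n ℂ) :
    |((Aᴴ * B).trace).re| ≤ frobNorm A * frobNorm B := by
  rw [trace_conjTranspose_mul_eq_inner, frobNorm_eq_norm_flattenL2, frobNorm_eq_norm_flattenL2]
  exact (Complex.abs_re_le_norm _).trans (norm_inner_le_norm _ _)

lemma frobNorm_mul_conjTranspose_sq (M N : Matrix m n ℂ) :
    frobNorm (N * Mᴴ) ^ 2 = (((Mᴴ * M) * (Nᴴ * N)).trace).re := by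
  rw [frobNorm_sq, conjTranspose_mul, conjTranspose_conjTranspose, ← Matrix.mul_assoc,
    trace_mul_cycle]
  simp only [Matrix.mul_assoc]

end

namespace Matrix

variable {n : Type*} [Fintype n] [DecidableEq n] {A : Matrix n n ℂ}

lemma IsHermitian.re_trace_eq_sum_eigenvalues (hA : A.IsHermitian) :
    A.trace.re = ∑ i, hA.eigenvalues i := by
  simp [hA.trace_eq_sum_eigenvalues, Complex.re_sum]

lemma IsHermitian.re_trace_mul_self (hA : A.IsHermitian) :
    ((A * A).trace).re = ∑ i, hA.eigenvalues i ^ 2 := by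
  conv_lhs => rw [hA.spectral_theorem, ← map_mul, Unitary.conjStarAlgAut_apply, trace_mul_cycle,
    Unitary.coe_star_mul_self, one_mul, diagonal_mul_diagonal, trace_diagonal]
  simp [sq, Complex.re_sum]

lemma IsHermitian.sq_re_trace_le_card_mul (hA : A.IsHermitian) :
    A.trace.re ^ 2 ≤ Fintype.card n * ((A * A).trace).re := by
  rw [hA.re_trace_mul_self, hA.re_trace_eq_sum_eigenvalues]
  exact sq_sum_le_card_mul_sum_sq

lemma IsHermitian.one_div_card_le_re_trace_mul_self (hA : A.IsHermitian) (h : A.trace = 1) :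
    1 / (Fintype.card n : ℝ) ≤ ((A * A).trace).re := by
  have key := hA.sq_re_trace_le_card_mul
  rw [h, Complex.one_re, one_pow] at key
  have hcard : (0 : ℝ) < Fintype.card n := by
    rcases (Nat.cast_nonneg (Fintype.card n) : (0 : ℝ) ≤ _).eq_or_lt with h0 | h0
    · rw [← h0, zero_mul] at key
      linarith
    · exact h0
  rw [div_le_iff₀ hcard]
  linarith

lemma PosSemidef.re_trace_mul_self_le_sq (hA : A.PosSemidef) :
    ((A * A).trace).re ≤ A.trace.re ^ 2 := by
  rw [hA.1.re_trace_mul_self, hA.1.re_trace_eq_sum_eigenvalues]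
  exact Finset.sum_sq_le_sq_sum_of_nonneg fun i _ => hA.eigenvalues_nonneg i

lemma PosSemidef.frobNorm_le_re_trace (hA : A.PosSemidef) : frobNorm A ≤ A.trace.re := by
  have htr : 0 ≤ A.trace.re := (Complex.nonneg_iff.mp hA.trace_nonneg).1
  rw [← pow_le_pow_iff_left₀ (frobNorm_nonneg A) htr two_ne_zero, frobNorm_sq, hA.1.eq]
  exact hA.re_trace_mul_self_le_sq

lemma PosSemidef.trace_matSqrt (hA : A.PosSemidef) :
    (matSqrt A).trace = ∑ i, ((√(hA.1.eigenvalues i) : ℝ) : ℂ) := by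
  rw [matSqrt, dif_pos hA, trace_mul_cycle, Unitary.coe_star_mul_self, one_mul, trace_diagonal]
  rfl

end Matrix

section

variable {m n : Type*} [Fintype m] [Fintype n] [DecidableEq n]

lemma traceNorm_eq_sum_sqrt_eigenvalues (A : Matrix m n ℂ) :
    traceNorm A = ∑ i, √((isHermitian_conjTranspose_mul_self A).eigenvalues i) := by
  simp [traceNorm, (posSemidef_conjTranspose_mul_self A).trace_matSqrt, Complex.re_sum]

lemma frobNorm_le_traceNorm (A : Matrix m n ℂ) : frobNorm A ≤ traceNorm A := by
  have hA := posSemidef_conjTranspose_mul_self A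
  have hsqrt : ∀ i, 0 ≤ √(hA.1.eigenvalues i) := fun i => Real.sqrt_nonneg _
  have htr : 0 ≤ traceNorm A := by
    rw [traceNorm_eq_sum_sqrt_eigenvalues]
    exact Finset.sum_nonneg fun i _ => hsqrt i
  rw [← pow_le_pow_iff_left₀ (frobNorm_nonneg A) htr two_ne_zero, frobNorm_sq,
    hA.1.re_trace_eq_sum_eigenvalues, traceNorm_eq_sum_sqrt_eigenvalues]
  calc ∑ i, hA.1.eigenvalues i = ∑ i, √(hA.1.eigenvalues i) ^ 2 :=
        Finset.sum_congr rfl fun i _ => (Real.sq_sqrt (hA.eigenvalues_nonneg i)).symm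
    _ ≤ (∑ i, √(hA.1.eigenvalues i)) ^ 2 :=
        Finset.sum_sq_le_sq_sum_of_nonneg fun i _ => hsqrt i

lemma one_div_min_card_le_re_trace_sq [DecidableEq m] (M : Matrix m n ℂ)
    (hM : (Mᴴ * M).trace = 1) :
    1 / min (Fintype.card m : ℝ) (Fintype.card n) ≤ (((Mᴴ * M) * (Mᴴ * M)).trace).re := by
  have hn := (isHermitian_conjTranspose_mul_self M).one_div_card_le_re_trace_mul_self hM
  have hm := (isHermitian_mul_conjTranspose_self M).one_div_card_le_re_trace_mul_self
    (by rw [trace_mul_comm, hM])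
  have hcycle : ((M * Mᴴ) * (M * Mᴴ)).trace = ((Mᴴ * M) * (Mᴴ * M)).trace := by
    rw [← Matrix.mul_assoc, trace_mul_cycle]
    simp only [Matrix.mul_assoc]
  rw [hcycle] at hm
  rcases le_total (Fintype.card m : ℝ) (Fintype.card n) with h | h
  · rwa [min_eq_left h]
  · rwa [min_eq_right h]

end

lemma largest_root_le_of_quadratic_nonneg {a b c x : ℝ} (ha : 0 < a) (hb : 0 ≤ b) (hx : 0 ≤ x)
    (h : 0 ≤ a * x ^ 2 + b * x + c) : (-b + √(discrim a b c)) / (2 * a) ≤ x := by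
  have hroot : √(discrim a b c) ≤ 2 * a * x + b :=
    Real.sqrt_le_iff.mpr ⟨by positivity, by rw [discrim]; nlinarith⟩
  rw [div_le_iff₀ (by positivity)]
  linarith

lemma sqrt_two_div_mul_le_of_le {t ε : ℝ} (hε : 0 ≤ ε)
    (h : 1 / t - 2 * √2 * ε ≤ 72 * ε ^ 2) : √2 / 72 * (-1 + √(1 + 36 / t)) ≤ ε := by
  have hroot := largest_root_le_of_quadratic_nonneg (a := 72) (b := 2 * √2) (c := -(1 / t))
    (by norm_num) (by positivity) hε (by linarith)
  have h8 : (2 * √2) ^ 2 = 8 := by rw [mul_pow, Real.sq_sqrt zero_le_two]; norm_num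
  rwa [discrim, show (2 * √2) ^ 2 - 4 * 72 * -(1 / t) = (2 * √2) ^ 2 * (1 + 36 / t) by
      rw [h8]; ring, Real.sqrt_mul (sq_nonneg _), Real.sqrt_sq (by positivity),
    show (-(2 * √2) + 2 * √2 * √(1 + 36 / t)) / (2 * 72) = √2 / 72 * (-1 + √(1 + 36 / t)) by
      ring] at hroot

theorem stmt11_general {r s : ℕ}
    (M N : Matrix (Fin r) (Fin s) ℂ) (ε : ℝ) (hε : 0 ≤ ε)
    (hM : (Mᴴ * M).trace = 1)
    (h2 : traceNorm (N * Mᴴ) ≤ 6 * Real.sqrt 2 * ε)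
    (h3 : traceNorm (Nᴴ * N - Mᴴ * M) ≤ 2 * Real.sqrt 2 * ε) :
    1 / (min r s : ℝ) - 2 * Real.sqrt 2 * ε ≤ 72 * ε ^ 2 ∧
      Real.sqrt 2 / 72 * (-1 + Real.sqrt (1 + 36 / (min r s : ℝ))) ≤ ε := by
  set P := Mᴴ * M
  set Q := Nᴴ * N
  have hPQ : ((P * Q).trace).re ≤ 72 * ε ^ 2 := by
    have hF := (frobNorm_le_traceNorm (N * Mᴴ)).trans h2
    rw [← frobNorm_mul_conjTranspose_sq]
    nlinarith [frobNorm_nonneg (N * Mᴴ), Real.sq_sqrt (zero_le_two : (0 : ℝ) ≤ 2)]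
  have hP := posSemidef_conjTranspose_mul_self M
  have hcross : |((P * (Q - P)).trace).re| ≤ 2 * √2 * ε := calc
    |((P * (Q - P)).trace).re| = |((Pᴴ * (Q - P)).trace).re| := by rw [hP.1.eq]
    _ ≤ frobNorm P * frobNorm (Q - P) := abs_re_trace_conjTranspose_mul_le P (Q - P)
    _ ≤ 1 * (2 * √2 * ε) := by
      refine mul_le_mul ?_ ((frobNorm_le_traceNorm _).trans h3) (frobNorm_nonneg _) zero_le_one
      exact hP.frobNorm_le_re_trace.trans_eq (by rw [hM, Complex.one_re])
    _ = 2 * √2 * ε := one_mul _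
  have hlow := one_div_min_card_le_re_trace_sq M hM
  simp only [Fintype.card_fin] at hlow
  have hsplit : ((P * Q).trace).re = ((P * P).trace).re + ((P * (Q - P)).trace).re := by
    rw [Matrix.mul_sub, trace_sub, sub_re]
    ring
  have key : 1 / (min r s : ℝ) - 2 * √2 * ε ≤ 72 * ε ^ 2 := by
    linarith [(abs_le.mp hcross).1]
  exact ⟨key, sqrt_two_div_mul_le_of_le hε key⟩

/-- Combining the bounds `‖MN†‖₁, ‖NM†‖₁ ≤ 6√2 ε` and `‖N†N - M†M‖₁ ≤ 2√2 ε` with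
`Tr(M†M) = 1` yields `72 ε² ≥ 1/t - 2√2 ε` with `t = min r s`, and hence
`ε ≥ (√2/72)(-1 + √(1 + 36/t))`. -/
theorem stmt11 {r s : ℕ} (hr : 1 ≤ r) (hs : 1 ≤ s)
    (M N : Matrix (Fin r) (Fin s) ℂ) (ε : ℝ) (hε : 0 ≤ ε)
    (hM : (Mᴴ * M).trace = 1)
    (h1 : traceNorm (M * Nᴴ) ≤ 6 * Real.sqrt 2 * ε)
    (h2 : traceNorm (N * Mᴴ) ≤ 6 * Real.sqrt 2 * ε)
    (h3 : traceNorm (Nᴴ * N - Mᴴ * M) ≤ 2 * Real.sqrt 2 * ε) :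
    1 / (min r s : ℝ) - 2 * Real.sqrt 2 * ε ≤ 72 * ε ^ 2 ∧
      Real.sqrt 2 / 72 * (-1 + Real.sqrt (1 + 36 / (min r s : ℝ))) ≤ ε :=
  stmt11_general M N ε hε hM h2 h3
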